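/- Let c₀ > 0 and δ > 0. Let f : ℝ → ℝ be continuous and 2π-periodic with f(0) = 0, ∫_{−π}^{π} f(x) dx ≥ c₀, and ∫_{−π}^{π} |f(x) − f̄|² dx < δ, where f̄ = (2π)^{−1} ∫_{−π}^{π} f(x) dx. Then for every α > 1/2 there is a constant c(α,c₀) > 0, depending only on α and c₀, such that ‖f‖_{Ḣ^α(T)} ≥ c(α,c₀) δ^{1/2−α}. -/

import Mathlib

/-!
Let `g = f - f̄`. Its Fourier coefficients agree with those of `f` off `k = 0` and vanish at
`k = 0`, so `g` has the same `Ḣ^α` norm as `f`, while Parseval gives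
`∑ |ĝ(k)|² = (2π)⁻¹ ∫ g² < δ / (2π)`. When that norm is finite, Cauchy–Schwarz against the weights
`|k|^{-α}`, which are square-summable because `2α > 1`, makes the Fourier series of `g` absolutely
convergent; the pinning `f(0) = 0` then gives `f̄ = -g(0) ≤ ∑_{k ≠ 0} |ĝ(k)|`. Split this sum at
`|k| = N`: by Cauchy–Schwarz the low frequencies contribute at most `√(2N · δ / (2π))` and the high
ones `≲ (N + 1)^{1/2 - α} ‖g‖_{Ḣ^α}`. Taking `N ≈ c₀² / δ` makes the first term at most half of
`f̄ ≥ c₀ / (2π)`, which forces `‖g‖_{Ḣ^α} ≳ N^{α - 1/2} ≈ δ^{1/2 - α}`.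
-/

open Real MeasureTheory Filter Topology
open scoped ENNReal NNReal

noncomputable section

/-- Fourier coefficients of a `2π`-periodic function on `ℝ` (a function on the circle `T`):
`f̂(k) = (2π)⁻¹ ∫_{-π}^{π} e^{-ikx} f(x) dx`. -/
def ccoef (f : ℝ → ℝ) (k : ℤ) : ℂ :=
  (2 * π : ℝ)⁻¹ * ∫ x in (-π)..π, Complex.exp (-Complex.I * (((k : ℝ) * x : ℝ) : ℂ)) * (f x : ℂ)

/-- Homogeneous Sobolev norm on the circle (valued in `ℝ≥0∞`):
`‖f‖_{Ḣ^α(T)}² = 2π Σ_{k ≠ 0} |k|^{2α} |f̂(k)|²`. -/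
def sobCircle (α : ℝ) (f : ℝ → ℝ) : ℝ≥0∞ :=
  (ENNReal.ofReal (2 * π) *
    ∑' k : ℤ, (if k = 0 then 0 else
      ENNReal.ofReal (|(k : ℝ)| ^ (2 * α)) * (‖ccoef f k‖₊ : ℝ≥0∞) ^ 2)) ^ (1/2 : ℝ)

end

section

variable {p : ℝ} {b : ℤ → ℝ}

theorem tsum_nat_rpow_tail_le (hp : 1 < p) (N : ℕ) :
    ∑' n : ℕ, (if N < n then (n : ℝ) ^ (-p) else 0) ≤ p / (p - 1) * (N + 1 : ℝ) ^ (1 - p) := by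
  have hN : (0 : ℝ) < (N + 1 : ℕ) := by positivity
  have hsum : Summable fun n : ℕ => ((n + (N + 1) : ℕ) : ℝ) ^ (-p) :=
    (summable_nat_add_iff (N + 1)).mpr (Real.summable_nat_rpow.mpr (by linarith))
  have hshift : ∑' n : ℕ, (if N < n then (n : ℝ) ^ (-p) else 0) =
      ∑' n : ℕ, ((n + (N + 1) : ℕ) : ℝ) ^ (-p) := by
    rw [← (add_left_injective (N + 1)).tsum_eq fun n hn => ⟨n - (N + 1), by
      have : N < n := by_contra fun h => hn (if_neg h)
      simp only
      omega⟩]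
    exact tsum_congr fun n => if_pos (by omega)
  have hint : ∑' n : ℕ, ((n + 1 + (N + 1) : ℕ) : ℝ) ^ (-p) ≤
      ((N + 1 : ℕ) : ℝ) ^ (1 - p) / (p - 1) := by
    have h := AntitoneOn.tsum_comp_add_le_integral (f := fun x : ℝ => x ^ (-p)) (N + 1)
      (fun x hx y _ hxy => Real.rpow_le_rpow_of_nonpos (hN.trans_le hx) hxy (by linarith))
      (integrableOn_Ioi_rpow_of_lt (by linarith) hN)
      (fun x hx => (Real.rpow_pos_of_pos (hN.trans hx) _).le)
    rw [integral_Ioi_rpow_of_lt (by linarith) hN, show -p + 1 = -(p - 1) by ring, neg_div_neg_eq,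
      show -(p - 1) = 1 - p by ring] at h
    convert h using 5
    omega
  have hfirst : ((N + 1 : ℕ) : ℝ) ^ (-p) ≤ ((N + 1 : ℕ) : ℝ) ^ (1 - p) :=
    Real.rpow_le_rpow_of_exponent_le (Nat.one_le_cast.mpr (by omega)) (by linarith)
  -- the integral test only starts at `N + 1 > 0`, so the term `n = N + 1` is bounded separately
  rw [hshift, hsum.tsum_eq_zero_add, zero_add]
  calc _ ≤ ((N + 1 : ℕ) : ℝ) ^ (1 - p) + ((N + 1 : ℕ) : ℝ) ^ (1 - p) / (p - 1) :=
        add_le_add hfirst hint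
    _ = _ := by
        have : p - 1 ≠ 0 := by linarith
        push_cast; field_simp; ring

theorem tsum_int_rpow_tail_le (hp : 1 < p) (N : ℕ) :
    ∑' k : ℤ, (if N < k.natAbs then |(k : ℝ)| ^ (-p) else 0) ≤
      2 * (p / (p - 1)) * (N + 1 : ℝ) ^ (1 - p) := by
  set h : ℕ → ℝ := fun n => if N < n then (n : ℝ) ^ (-p) else 0
  have heq : (fun k : ℤ => if N < k.natAbs then |(k : ℝ)| ^ (-p) else 0) =
      fun k => h k.natAbs := by
    ext k
    simp only [h, Nat.cast_natAbs, Int.cast_abs]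
  have hh : ∀ n, 0 ≤ h n := fun n => by simp only [h]; split_ifs <;> positivity
  have hsum : Summable fun k : ℤ => h k.natAbs := by
    refine (Real.summable_abs_int_rpow hp).of_nonneg_of_le (fun k => hh _) fun k => ?_
    simp only [h, Nat.cast_natAbs, Int.cast_abs]
    split_ifs
    exacts [le_rfl, by positivity]
  have hfold := hsum.hasSum.nat_add_neg
  simp only [Int.natAbs_neg, Int.natAbs_natCast, Int.natAbs_zero, h, Nat.not_lt_zero, if_false,
    add_zero, ← two_mul] at hfold
  rw [heq, ← hfold.tsum_eq, tsum_mul_left, mul_assoc]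
  gcongr
  exact tsum_nat_rpow_tail_le hp N

theorem card_erase_zero_filter_natAbs_le (s : Finset ℤ) (N : ℕ) :
    (((s.filter fun k => ¬N < k.natAbs).erase 0).card : ℝ) ≤ 2 * N := by
  have hsub : (s.filter fun k => ¬N < k.natAbs).erase 0 ⊆ (Finset.Icc (-(N : ℤ)) N).erase 0 :=
    Finset.erase_subset_erase _ fun k hk => by
      simp only [Finset.mem_filter, not_lt] at hk
      simp only [Finset.mem_Icc]
      omega
  have hcard : ((Finset.Icc (-(N : ℤ)) N).erase 0).card = 2 * N := by
    rw [Finset.card_erase_of_mem (by simp), Int.card_Icc]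
    omega
  exact_mod_cast hcard ▸ Finset.card_le_card hsub

theorem sum_le_sqrt_add_sqrt_tail (N : ℕ) (hb0 : b 0 = 0)
    (h2 : Summable fun k => b k ^ 2) (hw : Summable fun k : ℤ => |(k : ℝ)| ^ p * b k ^ 2)
    (htail : Summable fun k : ℤ => if N < k.natAbs then |(k : ℝ)| ^ (-p) else 0)
    (s : Finset ℤ) :
    ∑ k ∈ s, b k ≤ √(2 * N * ∑' k, b k ^ 2) +
      √((∑' k : ℤ, if N < k.natAbs then |(k : ℝ)| ^ (-p) else 0) *
        ∑' k : ℤ, |(k : ℝ)| ^ p * b k ^ 2) := by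
  classical
  rw [← Finset.sum_filter_not_add_sum_filter s fun k => N < k.natAbs]
  gcongr ?_ + ?_
  · rw [← Finset.sum_erase _ hb0]
    apply Real.le_sqrt_of_sq_le
    calc _ ≤ _ := sq_sum_le_card_mul_sum_sq
      _ ≤ _ := mul_le_mul (card_erase_zero_filter_natAbs_le s N)
          (Summable.sum_le_tsum _ (fun k _ => sq_nonneg _) h2)
          (Finset.sum_nonneg fun k _ => sq_nonneg _) (by positivity)
  · apply Real.le_sqrt_of_sq_le
    calc _ ≤ (∑ k ∈ s.filter fun k => N < k.natAbs, |(k : ℝ)| ^ (-p)) *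
          ∑ k ∈ s.filter fun k => N < k.natAbs, |(k : ℝ)| ^ p * b k ^ 2 := by
          refine Finset.sum_sq_le_sum_mul_sum_of_sq_le_mul _ (fun k _ => by positivity)
            (fun k _ => by positivity) fun k hk => ?_
          have hk0 : (k : ℝ) ≠ 0 := by
            simp only [Finset.mem_filter] at hk
            rintro h
            simp [Int.cast_eq_zero.mp h] at hk
          rw [← mul_assoc, ← Real.rpow_add (abs_pos.mpr hk0), neg_add_cancel, Real.rpow_zero,
            one_mul]
      _ ≤ _ := by
          have htail_le : ∑ k ∈ s.filter (fun k => N < k.natAbs), |(k : ℝ)| ^ (-p) ≤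
              ∑' k : ℤ, if N < k.natAbs then |(k : ℝ)| ^ (-p) else 0 := by
            rw [Finset.sum_filter]
            exact Summable.sum_le_tsum _ (fun k _ => by positivity) htail
          have hw_le : ∑ k ∈ s.filter (fun k => N < k.natAbs), |(k : ℝ)| ^ p * b k ^ 2 ≤
              ∑' k : ℤ, |(k : ℝ)| ^ p * b k ^ 2 :=
            (Finset.sum_le_sum_of_subset_of_nonneg (Finset.filter_subset _ s)
              fun k _ _ => by positivity).trans
              (Summable.sum_le_tsum _ (fun k _ => by positivity) hw)
          exact mul_le_mul htail_le hw_le (Finset.sum_nonneg fun k _ => by positivity)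
            (tsum_nonneg fun k => by positivity)

theorem summable_and_tsum_le_sqrt_add_sqrt (hp : 1 < p) (N : ℕ) (hb : ∀ k, 0 ≤ b k)
    (hb0 : b 0 = 0) (h2 : Summable fun k => b k ^ 2)
    (hw : Summable fun k : ℤ => |(k : ℝ)| ^ p * b k ^ 2) :
    Summable b ∧ ∑' k, b k ≤ √(2 * N * ∑' k, b k ^ 2) +
      √(2 * (p / (p - 1)) * (N + 1 : ℝ) ^ (1 - p) * ∑' k : ℤ, |(k : ℝ)| ^ p * b k ^ 2) := by
  have htail : Summable fun k : ℤ => if N < k.natAbs then |(k : ℝ)| ^ (-p) else 0 :=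
    (Real.summable_abs_int_rpow hp).of_nonneg_of_le (fun k => by split_ifs <;> positivity)
      fun k => by split_ifs; exacts [le_rfl, by positivity]
  have hsum_le : ∀ s : Finset ℤ, ∑ k ∈ s, b k ≤ √(2 * N * ∑' k, b k ^ 2) +
      √(2 * (p / (p - 1)) * (N + 1 : ℝ) ^ (1 - p) * ∑' k : ℤ, |(k : ℝ)| ^ p * b k ^ 2) := fun s =>
    (sum_le_sqrt_add_sqrt_tail N hb0 h2 hw htail s).trans <| by
      gcongr
      exact tsum_int_rpow_tail_le hp N
  exact ⟨summable_of_sum_le hb hsum_le, tsum_le_of_sum_le' (by positivity) hsum_le⟩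

end

theorem le_of_forall_nat_le_sqrt_add_sqrt {μ ε C p V : ℝ} (hμ : 0 < μ) (hε : 0 < ε) (hC : 0 < C)
    (hp : 1 < p) (h : ∀ N : ℕ, μ ≤ √(N * ε) + √(C * (N + 1 : ℝ) ^ (1 - p) * V)) :
    μ ^ 2 / (4 * C) * (μ ^ 2 / (4 * ε)) ^ (p - 1) ≤ V := by
  set x := μ ^ 2 / (4 * ε) with hx
  have hx0 : 0 < x := by positivity
  -- the largest `N` with `√(N * ε) ≤ μ / 2`
  set N := ⌊x⌋₊
  have hlow : √(N * ε) ≤ μ / 2 := by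
    rw [Real.sqrt_le_left (by positivity)]
    calc (N : ℝ) * ε ≤ x * ε := by gcongr; exact Nat.floor_le hx0.le
      _ = (μ / 2) ^ 2 := by rw [hx]; field_simp; ring
  have hhigh : (μ / 2) ^ 2 ≤ C * (N + 1 : ℝ) ^ (1 - p) * V :=
    (Real.le_sqrt' (by positivity)).mp (by linarith [h N])
  have hV : 0 < V :=
    pos_of_mul_pos_right ((by positivity : 0 < (μ / 2) ^ 2).trans_le hhigh) (by positivity)
  have hNx : (N + 1 : ℝ) ^ (1 - p) ≤ x ^ (1 - p) :=
    Real.rpow_le_rpow_of_nonpos hx0 (Nat.lt_floor_add_one x).le (by linarith)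
  calc μ ^ 2 / (4 * C) * x ^ (p - 1) = (μ / 2) ^ 2 * x ^ (p - 1) / C := by ring
    _ ≤ C * x ^ (1 - p) * V * x ^ (p - 1) / C := by gcongr; exact hhigh.trans (by gcongr)
    _ = V := by
        rw [show 1 - p = -(p - 1) by ring, Real.rpow_neg hx0.le]
        field_simp

open AddCircle

local instance : Fact (0 < 2 * π) := ⟨two_pi_pos⟩

theorem fourier_neg_coe_eq_exp (k : ℤ) (x : ℝ) :
    fourier (-k) (x : AddCircle (2 * π)) = Complex.exp (-Complex.I * ((k * x : ℝ) : ℂ)) := by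
  rw [fourier_coe_apply]
  congr 1
  have : (π : ℂ) ≠ 0 := Complex.ofReal_ne_zero.mpr pi_ne_zero
  push_cast
  field_simp

theorem ccoef_eq_fourierCoeff {f : ℝ → ℝ} {F : AddCircle (2 * π) → ℂ} (hF : ∀ x : ℝ, F x = f x)
    (k : ℤ) : ccoef f k = fourierCoeff F k := by
  rw [fourierCoeff_eq_intervalIntegral F k (-π), show -π + 2 * π = π by ring, ccoef]
  simp only [smul_eq_mul, fourier_neg_coe_eq_exp, hF, Complex.real_smul]
  push_cast
  ring

theorem exists_continuousMap_addCircle_eq {f : ℝ → ℝ} (hf : Continuous f)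
    (hper : Function.Periodic f (2 * π)) :
    ∃ F : C(AddCircle (2 * π), ℂ), ∀ x : ℝ, F x = f x := by
  have hperC : Function.Periodic (fun x => (f x : ℂ)) (2 * π) := fun x => by simp [hper x]
  refine ⟨⟨hperC.lift, ?_⟩, hperC.lift_coe⟩
  exact (QuotientAddGroup.isQuotientMap_mk _).continuous_iff.mpr
    (Complex.continuous_ofReal.comp hf)

theorem hasSum_norm_ccoef_sq {f : ℝ → ℝ} (hf : Continuous f)
    (hper : Function.Periodic f (2 * π)) :
    HasSum (fun k => ‖ccoef f k‖ ^ 2) ((2 * π)⁻¹ * ∫ x in (-π)..π, f x ^ 2) := by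
  obtain ⟨F, hF⟩ := exists_continuousMap_addCircle_eq hf hper
  have h := hasSum_sq_fourierCoeff (ContinuousMap.toLp 2 haarAddCircle ℂ F)
  simp only [fourierCoeff_toLp, ← ccoef_eq_fourierCoeff hF] at h
  convert h using 1
  rw [integral_congr_ae
      ((ContinuousMap.coeFn_toLp (p := 2) haarAddCircle F).mono fun t ht => by rw [ht]),
    integral_haarAddCircle, ← AddCircle.intervalIntegral_preimage (2 * π) (-π),
    show -π + 2 * π = π by ring, smul_eq_mul]
  simp [hF]

theorem hasSum_ccoef_of_summable {f : ℝ → ℝ} (hf : Continuous f)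
    (hper : Function.Periodic f (2 * π)) (h : Summable (ccoef f)) : HasSum (ccoef f) (f 0) := by
  obtain ⟨F, hF⟩ := exists_continuousMap_addCircle_eq hf hper
  have hcoef := funext (ccoef_eq_fourierCoeff hF)
  have hsum := has_pointwise_sum_fourier_series_of_summable (hcoef ▸ h) 0
  simpa [fourier_eval_zero, ← hcoef, ← QuotientAddGroup.mk_zero, hF] using hsum

theorem ccoef_zero (f : ℝ → ℝ) : ccoef f 0 = (((2 * π)⁻¹ * ∫ x in (-π)..π, f x : ℝ) : ℂ) := by
  simp [ccoef, intervalIntegral.integral_ofReal]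

theorem ccoef_const (c : ℝ) (k : ℤ) : ccoef (fun _ => c) k = if k = 0 then (c : ℂ) else 0 := by
  have hF : ∀ x : ℝ, ((c : ℂ) • fourier 0 : C(AddCircle (2 * π), ℂ)) x = c := by simp
  rw [ccoef_eq_fourierCoeff hF, ContinuousMap.coe_smul, fourierCoeff.const_smul,
    fourierCoeff_fourier, Pi.single_apply]
  simp

theorem ccoef_sub {f g : ℝ → ℝ} (hf : Continuous f) (hg : Continuous g) (k : ℤ) :
    ccoef (fun x => f x - g x) k = ccoef f k - ccoef g k := by
  simp only [ccoef, Complex.ofReal_sub, mul_sub]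
  rw [intervalIntegral.integral_sub ((by fun_prop : Continuous _).intervalIntegrable _ _)
    ((by fun_prop : Continuous _).intervalIntegrable _ _), mul_sub]

theorem sobCircle_congr {f g : ℝ → ℝ} (α : ℝ) (h : ∀ k ≠ 0, ccoef f k = ccoef g k) :
    sobCircle α f = sobCircle α g := by
  unfold sobCircle
  congr 3 with k
  split_ifs with hk
  · rfl
  · rw [h k hk]

theorem sobCircle_sub_const {f : ℝ → ℝ} (hf : Continuous f) (α c : ℝ) :
    sobCircle α (fun x => f x - c) = sobCircle α f :=
  sobCircle_congr α fun k hk => by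
    rw [ccoef_sub hf continuous_const, ccoef_const, if_neg hk, sub_zero]

theorem sobCircle_eq_rpow_tsum_ofReal {f : ℝ → ℝ} (α : ℝ) (h0 : ccoef f 0 = 0) :
    sobCircle α f = (ENNReal.ofReal (2 * π) *
      ∑' k : ℤ, ENNReal.ofReal (|(k : ℝ)| ^ (2 * α) * ‖ccoef f k‖ ^ 2)) ^ (1 / 2 : ℝ) := by
  unfold sobCircle
  congr 3 with k
  split_ifs with hk
  · simp [hk, h0]
  · rw [ENNReal.ofReal_mul (by positivity), ENNReal.ofReal_pow (norm_nonneg _), ofReal_norm]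
    rfl

theorem sobCircle_eq_ofReal_sqrt {f : ℝ → ℝ} (α : ℝ) (h0 : ccoef f 0 = 0)
    (hw : Summable fun k : ℤ => |(k : ℝ)| ^ (2 * α) * ‖ccoef f k‖ ^ 2) :
    sobCircle α f =
      ENNReal.ofReal √(2 * π * ∑' k : ℤ, |(k : ℝ)| ^ (2 * α) * ‖ccoef f k‖ ^ 2) := by
  rw [sobCircle_eq_rpow_tsum_ofReal α h0,
    ← ENNReal.ofReal_tsum_of_nonneg (fun k => by positivity) hw,
    ← ENNReal.ofReal_mul (by positivity),
    ENNReal.ofReal_rpow_of_nonneg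
      (mul_nonneg two_pi_pos.le (tsum_nonneg fun k => by positivity)) (by norm_num),
    Real.sqrt_eq_rpow]

theorem sobCircle_eq_top {f : ℝ → ℝ} (α : ℝ) (h0 : ccoef f 0 = 0)
    (hw : ¬Summable fun k : ℤ => |(k : ℝ)| ^ (2 * α) * ‖ccoef f k‖ ^ 2) :
    sobCircle α f = ⊤ := by
  have htop : ∑' k : ℤ, ENNReal.ofReal (|(k : ℝ)| ^ (2 * α) * ‖ccoef f k‖ ^ 2) = ⊤ := by
    by_contra hne
    exact hw ((ENNReal.summable_toReal hne).congr fun k => ENNReal.toReal_ofReal (by positivity))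
  rw [sobCircle_eq_rpow_tsum_ofReal α h0, htop, ENNReal.mul_top (by simp [pi_pos]),
    ENNReal.top_rpow_of_pos (by norm_num)]

theorem abs_apply_zero_le_of_summable_sobolev {g : ℝ → ℝ} {α : ℝ} (hα : 1 / 2 < α)
    (hg : Continuous g) (hper : Function.Periodic g (2 * π)) (h0 : ccoef g 0 = 0)
    (hw : Summable fun k : ℤ => |(k : ℝ)| ^ (2 * α) * ‖ccoef g k‖ ^ 2) (N : ℕ) :
    |g 0| ≤ √(2 * N * ((2 * π)⁻¹ * ∫ x in (-π)..π, g x ^ 2)) +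
      √(2 * (2 * α / (2 * α - 1)) * (N + 1 : ℝ) ^ (1 - 2 * α) *
        ∑' k : ℤ, |(k : ℝ)| ^ (2 * α) * ‖ccoef g k‖ ^ 2) := by
  have hparseval := hasSum_norm_ccoef_sq hg hper
  obtain ⟨hb, hle⟩ := summable_and_tsum_le_sqrt_add_sqrt (b := fun k => ‖ccoef g k‖)
    (p := 2 * α) (by linarith) N (fun k => norm_nonneg _) (by simp [h0]) hparseval.summable hw
  rw [hparseval.tsum_eq] at hle
  calc |g 0| = ‖∑' k, ccoef g k‖ := by
        rw [(hasSum_ccoef_of_summable hg hper hb.of_norm).tsum_eq, Complex.norm_real,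
          Real.norm_eq_abs]
    _ ≤ ∑' k, ‖ccoef g k‖ := norm_tsum_le_tsum_norm hb
    _ ≤ _ := hle

theorem exists_pos_ofReal_mul_rpow_le_sobCircle {α μ : ℝ} (hα : 1 / 2 < α) (hμ : 0 < μ) :
    ∃ c : ℝ, 0 < c ∧ ∀ δ : ℝ, 0 < δ → ∀ g : ℝ → ℝ, Continuous g →
      Function.Periodic g (2 * π) → ccoef g 0 = 0 → μ ≤ |g 0| →
      ∫ x in (-π)..π, g x ^ 2 < δ → ENNReal.ofReal (c * δ ^ (1 / 2 - α)) ≤ sobCircle α g := by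
  set C := 2 * (2 * α / (2 * α - 1))
  have hC : 0 < C := mul_pos two_pos (div_pos (by linarith) (by linarith))
  refine ⟨√(2 * π * (μ ^ 2 / (4 * C) * (μ ^ 2 * π / 4) ^ (2 * α - 1))), by positivity, ?_⟩
  intro δ hδ g hg hper h0 hμg hosc
  by_cases hw : Summable fun k : ℤ => |(k : ℝ)| ^ (2 * α) * ‖ccoef g k‖ ^ 2
  swap
  · rw [sobCircle_eq_top α h0 hw]
    exact le_top
  rw [sobCircle_eq_ofReal_sqrt α h0 hw]
  refine ENNReal.ofReal_le_ofReal ?_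
  set V := ∑' k : ℤ, |(k : ℝ)| ^ (2 * α) * ‖ccoef g k‖ ^ 2
  have key : ∀ N : ℕ, μ ≤ √(N * (δ / π)) + √(C * (N + 1 : ℝ) ^ (1 - 2 * α) * V) := fun N =>
    calc μ ≤ |g 0| := hμg
      _ ≤ _ := abs_apply_zero_le_of_summable_sobolev hα hg hper h0 hw N
      _ ≤ _ := by
          gcongr ?_ + _
          refine Real.sqrt_le_sqrt ?_
          rw [show 2 * (N : ℝ) * ((2 * π)⁻¹ * ∫ x in (-π)..π, g x ^ 2) =
            N * ((∫ x in (-π)..π, g x ^ 2) / π) by field_simp]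
          gcongr
  have hV := le_of_forall_nat_le_sqrt_add_sqrt hμ (by positivity) hC (by linarith) key
  have hδpow : δ ^ (1 / 2 - α) = √((δ ^ (2 * α - 1))⁻¹) := by
    rw [← Real.rpow_neg hδ.le, Real.sqrt_eq_rpow, ← Real.rpow_mul hδ.le]
    congr 1
    ring
  calc _ = √(2 * π * (μ ^ 2 / (4 * C) * (μ ^ 2 / (4 * (δ / π))) ^ (2 * α - 1))) := by
        rw [hδpow, ← Real.sqrt_mul (by positivity),
          show μ ^ 2 / (4 * (δ / π)) = μ ^ 2 * π / 4 / δ by field_simp,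
          Real.div_rpow (by positivity) hδ.le]
        congr 1
        ring
    _ ≤ _ := by gcongr

/-- A continuous `2π`-periodic function with `f(0) = 0`, mean bounded below by
`c₀ > 0`, and small `L²`-oscillation `∫|f - f̄|² < δ` has a large `Ḣ^α` norm for `α > 1/2`:
`‖f‖_{Ḣ^α(T)} ≥ c(α,c₀) δ^{1/2-α}` with `c(α,c₀) > 0` depending only on `α` and `c₀`. -/
theorem circle_pinned_oscillation_lower_bound
    (α c₀ : ℝ) (hα : 1/2 < α) (hc₀ : 0 < c₀) :
    ∃ c : ℝ, 0 < c ∧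
      ∀ δ : ℝ, 0 < δ →
      ∀ f : ℝ → ℝ, Continuous f → (∀ x : ℝ, f (x + 2 * π) = f x) →
        f 0 = 0 →
        c₀ ≤ ∫ x in (-π)..π, f x →
        (∫ x in (-π)..π, (f x - (2 * π)⁻¹ * ∫ y in (-π)..π, f y) ^ 2) < δ →
        ENNReal.ofReal (c * δ ^ (1/2 - α)) ≤ sobCircle α f := by
  obtain ⟨c, hc, hbound⟩ :=
    exists_pos_ofReal_mul_rpow_le_sobCircle (μ := c₀ / (2 * π)) hα (by positivity)
  refine ⟨c, hc, fun δ hδ f hf hper hf0 hmean hosc => ?_⟩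
  set m := (2 * π)⁻¹ * ∫ y in (-π)..π, f y with hm_def
  have hm : c₀ / (2 * π) ≤ m := by
    rw [hm_def, inv_mul_eq_div]
    gcongr
  rw [← sobCircle_sub_const hf α m]
  refine hbound δ hδ (fun x => f x - m) (hf.sub continuous_const) (fun x => by simp [hper x])
    ?_ ?_ hosc
  · rw [ccoef_sub hf continuous_const, ccoef_const, if_pos rfl, ccoef_zero, sub_self]
  · rwa [hf0, zero_sub, abs_neg, abs_of_pos ((by positivity : 0 < c₀ / (2 * π)).trans_le hm)]
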